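/- arXiv:0801.2272 — 5 statements merged into one kernel-verified Lean document; each statement's English description precedes it below -/
import Mathlib

section
/- Let N/K be a tower of number fields with intermediate field L, such that N/K is a tame abelian extension with Galois group G, and let H = Gal(L/K). If the ring of integers O_N is free of rank 1 as an O_K[G]-module (i.e., N/K has a normal integral basis), then O_L is free of rank 1 as an O_K[H]-module (i.e., L/K has a normal integral basis). -/
open NumberField

/-- Tame extension of number fields: no residue characteristic divides the
corresponding ramification index. -/
def IsTameExt (K N : Type*) [Field K] [Field N] [NumberField K] [NumberField N]
    [Algebra K N] : Prop :=
  ∀ P : Ideal (𝓞 N), P.IsMaximal →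
    ¬ (ringChar ((𝓞 N) ⧸ P) ∣
        Ideal.ramificationIdx'
          (P.comap (algebraMap (𝓞 K) (𝓞 N))) P)

/-- L/K has a normal integral basis: O_L is free of rank one over O_K[Gal(L/K)],
i.e. there is α ∈ O_L such that every element of O_L is uniquely an
O_K-linear combination of the Galois conjugates of α. -/
def HasNIB (K L : Type*) [Field K] [Field L] [NumberField K] [NumberField L]
    [Algebra K L] [FiniteDimensional K L] : Prop :=
  ∃ α : 𝓞 L, ∀ x : 𝓞 L, ∃! c : (L ≃ₐ[K] L) → 𝓞 K,
    (x : L) = ∑ g : L ≃ₐ[K] L, algebraMap K L (c g : K) * g (α : L)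

/-! Let `π : G → H` be restriction and `α` a generator of a normal integral basis of `N/K`.
The sums of the conjugates `g α` over the fibres of `π` are the conjugates `h β` of some
`β ∈ 𝓞 L` (in effect `β = Tr_{N/L} α`), so `∑ h, e h • h β = ∑ g, e (π g) • g α`.
An element of `𝓞 L` is fixed by `ker π`, so by uniqueness its coordinates with respect to `α`
are constant on the fibres of `π`, i.e. of the form `e ∘ π`; as `π` is surjective, `e` is
unique, hence `β` generates `𝓞 L`. Since `G` is abelian, `L/K` is Galois and all this applies. -/

theorem Finset.smul_sum_fiber {G H M : Type*} [Group G] [Fintype G] [Group H] [DecidableEq H]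
    [AddCommMonoid M] [DistribMulAction G M] (π : G →* H) (x : M) (g : G) (h : H) :
    g • ∑ g' with π g' = h, g' • x = ∑ g' with π g' = π g * h, g' • x := by
  rw [Finset.smul_sum]
  refine Finset.sum_equiv (Equiv.mulLeft g) (fun g' => ?_) (fun g' _ => (mul_smul g g' x).symm)
  simp

theorem AlgEquiv.apply_sum_algebraMap_mul {K N : Type*} [Field K] [Field N] [Algebra K N]
    [Fintype Gal(N/K)] (τ : Gal(N/K)) (c : Gal(N/K) → K) (α : N) :
    τ (∑ g, algebraMap K N (c g) * g α) = ∑ g, algebraMap K N (c (τ⁻¹ * g)) * g α := by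
  rw [map_sum]
  refine Fintype.sum_equiv (Equiv.mulLeft τ) _ _ fun g => ?_
  simp

section GaloisTower

open AlgEquiv

variable {K L N : Type*} [Field K] [Field L] [Field N] [Algebra K L] [Algebra L N] [Algebra K N]
  [IsScalarTower K L N] [Normal K L]

theorem AlgEquiv.restrictNormalHom_restrictScalars (σ : Gal(N/L)) :
    restrictNormalHom L (σ.restrictScalars K) = 1 := by
  ext y
  exact (algebraMap L N).injective ((restrictNormal_commutes _ L y).trans (σ.commutes y))

variable [FiniteDimensional K N]

theorem sum_algebraMap_comp_restrictNormalHom_mul [FiniteDimensional K L] [DecidableEq Gal(L/K)]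
    {α : N} {β : L}
    (hβ : ∀ h, ∑ g : Gal(N/K) with restrictNormalHom L g = h, g α = algebraMap L N (h β))
    (e : Gal(L/K) → K) :
    ∑ g : Gal(N/K), algebraMap K N (e (restrictNormalHom L g)) * g α =
      algebraMap L N (∑ h, algebraMap K L (e h) * h β) := by
  rw [← Finset.sum_fiberwise Finset.univ (restrictNormalHom L), map_sum]
  refine Finset.sum_congr rfl fun h _ => ?_
  rw [map_mul, ← IsScalarTower.algebraMap_apply, ← hβ h, Finset.mul_sum]
  refine Finset.sum_congr rfl fun g hg => ?_
  rw [(Finset.mem_filter.mp hg).2]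

variable [IsGalois K N]

theorem exists_sum_fiber_restrictNormalHom_eq [DecidableEq Gal(L/K)] (α : N) :
    ∃ β : L, ∀ h : Gal(L/K),
      ∑ g : Gal(N/K) with restrictNormalHom L g = h, g α = algebraMap L N (h β) := by
  have := IsGalois.tower_top_of_isGalois K L N
  have := Module.Finite.of_restrictScalars_finite K L N
  have hfiber (g : Gal(N/K)) (h : Gal(L/K)) := Finset.smul_sum_fiber (restrictNormalHom L) α g h
  simp only [AlgEquiv.smul_def] at hfiber
  obtain ⟨β, hβ⟩ := (IsGalois.mem_range_algebraMap_iff_fixed (F := L)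
    (∑ g : Gal(N/K) with restrictNormalHom L g = 1, g α)).mpr fun σ => by
      rw [← σ.restrictScalars_apply K, hfiber, restrictNormalHom_restrictScalars (K := K) σ,
        mul_one]
  refine ⟨β, fun h => ?_⟩
  obtain ⟨g, rfl⟩ := restrictNormalHom_surjective N h
  rw [← mul_one (restrictNormalHom L g), ← hfiber, ← hβ, mul_one]
  exact (restrictNormal_commutes g L β).symm

theorem HasNIB.tower_bot [NumberField K] [NumberField L] [NumberField N] [FiniteDimensional K L]
    (hN : HasNIB K N) : HasNIB K L := by
  classical
  obtain ⟨α, hα⟩ := hN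
  obtain ⟨β, hβ⟩ := exists_sum_fiber_restrictNormalHom_eq (K := K) (L := L) (α : N)
  have hβ_int : IsIntegral ℤ β := by
    refine (isIntegral_algebraMap_iff (algebraMap L N).injective).mp ?_
    rw [← show (1 : Gal(L/K)) β = β from rfl, ← hβ 1]
    exact IsIntegral.sum _ fun g _ => α.isIntegral_coe.map (g.toAlgHom.restrictScalars ℤ)
  refine ⟨⟨β, hβ_int⟩, fun x => ?_⟩
  obtain ⟨c, hc, hc_unique⟩ := hα (algebraMap (𝓞 L) (𝓞 N) x)
  have hx : ((algebraMap (𝓞 L) (𝓞 N) x : 𝓞 N) : N) = algebraMap L N x := rfl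
  have hc_fiber : c.FactorsThrough (restrictNormalHom L) := by
    intro g g' hgg'
    set τ := g' * g⁻¹
    have hτ : τ (algebraMap L N x) = algebraMap L N x := by
      rw [← restrictNormal_commutes, show restrictNormal τ L = restrictNormalHom L τ from rfl,
        map_mul, map_inv, hgg', mul_inv_cancel, one_apply]
    have := hc_unique (fun g => c (τ⁻¹ * g))
      (by rw [hx, ← hτ, ← hx, hc, apply_sum_algebraMap_mul])
    simpa [τ] using congrFun this g'
  have h_iff (e : Gal(L/K) → 𝓞 K) :
      (x : L) = ∑ h, algebraMap K L (e h) * h β ↔ e ∘ restrictNormalHom L = c := by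
    rw [← (algebraMap L N).injective.eq_iff,
      ← sum_algebraMap_comp_restrictNormalHom_mul hβ (fun h => (e h : K)), ← hx]
    exact ⟨hc_unique _, fun he => by subst he; exact hc⟩
  have hc_extend : Function.extend _ c (fun _ => 0) ∘ restrictNormalHom L = c :=
    funext (hc_fiber.extend_apply _)
  refine (existsUnique_congr h_iff).mpr ⟨_, hc_extend, fun e he => ?_⟩
  exact (restrictNormalHom_surjective N).injective_comp_right (he.trans hc_extend.symm)

end GaloisTower

theorem stmt_0_general (K L N : Type*) [Field K] [Field L] [Field N]
    [NumberField K] [NumberField L] [NumberField N]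
    [Algebra K L] [Algebra L N] [Algebra K N] [IsScalarTower K L N]
    [FiniteDimensional K L] [FiniteDimensional K N]
    [IsGalois K N]
    (habel : ∀ σ τ : N ≃ₐ[K] N, σ * τ = τ * σ)
    (hNIB : HasNIB K N) :
    HasNIB K L := by
  have : IsAbelianGalois K N := { is_comm := ⟨habel⟩ }
  have := IsAbelianGalois.tower_bot K L N
  exact hNIB.tower_bot

/-- in a tower K ⊆ L ⊆ N with N/K tame abelian, a normal integral
basis for N/K yields one for L/K. -/
theorem stmt_0 (K L N : Type*) [Field K] [Field L] [Field N]
    [NumberField K] [NumberField L] [NumberField N]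
    [Algebra K L] [Algebra L N] [Algebra K N] [IsScalarTower K L N]
    [FiniteDimensional K L] [FiniteDimensional K N]
    [IsGalois K N]
    (habel : ∀ σ τ : N ≃ₐ[K] N, σ * τ = τ * σ)
    (htame : IsTameExt K N)
    (hNIB : HasNIB K N) :
    HasNIB K L :=
  stmt_0_general K L N habel hNIB
end

section
/- Let ℓ > 3 be an odd prime, r an odd prime, and let Δ = (ℤ/ℓℤ)^× act on the free module (ℤ/rℤ)[Δ]. Let u = Σ_{i=1}^{ℓ-1} i·δ_i^{-1} and v = Σ_{i=(ℓ+1)/2}^{ℓ-1} δ_i^{-1} in (ℤ/rℤ)[Δ], and let π be the projection to the minus part given by δ_{ℓ-i}^{-1} ↦ -δ_i^{-1} for 1 ≤ i ≤ (ℓ-1)/2. Then π(u) and π(v) generate a subgroup of the minus part isomorphic to (ℤ/rℤ)². -/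
/-!
The coefficients of `π u` and `π v` at `δ_1⁻¹` and `δ_2⁻¹` are `(2 - ℓ, -1)` and `(4 - ℓ, -1)`.
This minor has determinant `2`, a unit in `ℤ/rℤ` as `r` is odd, so `π u` and `π v` are
`ℤ/rℤ`-linearly independent; since every additive subgroup of a `ℤ/rℤ`-module is a submodule,
the subgroup they generate is their span, free of rank two.
-/

open Finset

theorem Finsupp.finsetSum_single_inv_apply {R G : Type*} [AddCommMonoid R] [Group G]
    [DecidableEq G] (s : Finset G) (f : G → R) (e : G) :
    (∑ d ∈ s, single d⁻¹ (f d)) e = if e⁻¹ ∈ s then f e⁻¹ else 0 := by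
  simp [finsetSum_apply, single_apply, inv_eq_iff_eq_inv]

theorem ZMod.val_neg_natCast {n a : ℕ} (ha0 : 0 < a) (han : a < n) :
    (-(a : ZMod n)).val = n - a := by
  have : NeZero n := ⟨by omega⟩
  have ha : (a : ZMod n) ≠ 0 := by
    rw [Ne, ZMod.natCast_eq_zero_iff]; exact Nat.not_dvd_of_pos_of_lt ha0 han
  rw [ZMod.neg_val, if_neg ha, ZMod.val_cast_of_lt han]

theorem AddSubgroup.toZModSubmodule_closure {n : ℕ} {M : Type*} [AddCommGroup M]
    [Module (ZMod n) M] (s : Set M) :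
    toZModSubmodule n (closure s) = Submodule.span (ZMod n) s :=
  le_antisymm ((toZModSubmodule n).le_symm_apply.mp (closure_le _ |>.mpr Submodule.subset_span))
    (Submodule.span_le.mpr subset_closure)

theorem LinearIndependent.nonempty_addEquiv_closure_pair {n : ℕ} {M : Type*} [AddCommGroup M]
    [Module (ZMod n) M] {x y : M} (h : LinearIndependent (ZMod n) ![x, y]) :
    Nonempty (AddSubgroup.closure {x, y} ≃+ ZMod n × ZMod n) := by
  have hspan : AddSubgroup.closure {x, y} =
      (Submodule.span (ZMod n) (Set.range ![x, y])).toAddSubgroup := by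
    rw [Matrix.range_cons_cons_empty, ← AddSubgroup.toZModSubmodule_closure]; rfl
  exact ⟨(AddEquiv.addSubgroupCongr hspan).trans
    ((Module.Basis.span h).equivFun.trans (LinearEquiv.finTwoArrow (ZMod n) (ZMod n))).toAddEquiv⟩

theorem LinearIndependent.pair_of_isUnit_det {X R : Type*} [CommRing R] {f g : X → R} (a b : X)
    (h : IsUnit (f a * g b - f b * g a)) : LinearIndependent R ![f, g] := by
  refine LinearIndependent.pair_iff.mpr fun s t hst => ?_
  have ha : s * f a + t * g a = 0 := by simpa using congrFun hst a
  have hb : s * f b + t * g b = 0 := by simpa using congrFun hst b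
  constructor
  · exact (h.mul_left_eq_zero).mp (by linear_combination g b * ha - g a * hb)
  · exact (h.mul_left_eq_zero).mp (by linear_combination f a * hb - f b * ha)

section MinusPart

variable (ℓ r : ℕ) [NeZero ℓ]

noncomputable def elemU : MonoidAlgebra (ZMod r) (ZMod ℓ)ˣ :=
  MonoidAlgebra.ofCoeff (∑ d : (ZMod ℓ)ˣ, Finsupp.single d⁻¹ (((d : ZMod ℓ).val : ZMod r)))

noncomputable def elemV : MonoidAlgebra (ZMod r) (ZMod ℓ)ˣ :=
  MonoidAlgebra.ofCoeff
    (∑ d ∈ univ.filter (fun d : (ZMod ℓ)ˣ => (ℓ + 1) / 2 ≤ (d : ZMod ℓ).val),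
      Finsupp.single d⁻¹ (1 : ZMod r))

def minusProj {R G : Type*} [Ring R] [Neg G] (x : MonoidAlgebra R G) (d : G) : R :=
  x.coeff d - x.coeff (-d)

variable {ℓ r}

theorem minusProj_elemU {a : ℕ} (ha0 : 0 < a) (haℓ : a < ℓ) {d : (ZMod ℓ)ˣ}
    (hd : ((d⁻¹ : (ZMod ℓ)ˣ) : ZMod ℓ) = a) :
    minusProj (elemU ℓ r) d = 2 * a - ℓ := by
  simp only [minusProj, elemU, MonoidAlgebra.coeff_ofCoeff, Finsupp.finsetSum_single_inv_apply,
    mem_univ, if_true, inv_neg, Units.val_neg, hd, ZMod.val_cast_of_lt haℓ,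
    ZMod.val_neg_natCast ha0 haℓ]
  push_cast [haℓ.le]
  ring

theorem minusProj_elemV {a : ℕ} (ha0 : 0 < a) (haℓ : 2 * a < ℓ) {d : (ZMod ℓ)ˣ}
    (hd : ((d⁻¹ : (ZMod ℓ)ˣ) : ZMod ℓ) = a) :
    minusProj (elemV ℓ r) d = -1 := by
  have haℓ' : a < ℓ := by omega
  simp only [minusProj, elemV, MonoidAlgebra.coeff_ofCoeff, Finsupp.finsetSum_single_inv_apply,
    mem_filter, mem_univ, true_and, inv_neg, Units.val_neg, hd, ZMod.val_cast_of_lt haℓ',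
    ZMod.val_neg_natCast ha0 haℓ']
  rw [if_neg (by omega), if_pos (by omega)]
  ring

end MinusPart

theorem stmt_8_general (ℓ r : ℕ) [Fact ℓ.Prime]
    (hlodd : Odd ℓ) (hl3 : 3 < ℓ) (hrodd : Odd r) :
    ∀ u v : MonoidAlgebra (ZMod r) (ZMod ℓ)ˣ,
      u = MonoidAlgebra.ofCoeff (∑ d : (ZMod ℓ)ˣ, Finsupp.single d⁻¹ (((d : ZMod ℓ).val : ZMod r))) →
      v = MonoidAlgebra.ofCoeff (∑ d ∈ Finset.univ.filter (fun d : (ZMod ℓ)ˣ => (ℓ + 1) / 2 ≤ (d : ZMod ℓ).val),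
            Finsupp.single d⁻¹ (1 : ZMod r)) →
      ∀ π : MonoidAlgebra (ZMod r) (ZMod ℓ)ˣ → ((ZMod ℓ)ˣ → ZMod r),
        (∀ x d, π x d = x.coeff d - x.coeff (-d)) →
        Nonempty (↥(AddSubgroup.closure ({π u, π v} : Set ((ZMod ℓ)ˣ → ZMod r)))
          ≃+ (ZMod r × ZMod r)) := by
  intro u v hu hv π hπ
  obtain rfl : u = elemU ℓ r := hu
  obtain rfl : v = elemV ℓ r := hv
  obtain rfl : π = minusProj := funext fun x => funext (hπ x)
  have hl5 : 5 ≤ ℓ := by obtain ⟨k, rfl⟩ := hlodd; omega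
  set w := ZMod.unitOfCoprime 2 (Nat.coprime_two_left.mpr hlodd)
  have h1 : (((1 : (ZMod ℓ)ˣ)⁻¹ : (ZMod ℓ)ˣ) : ZMod ℓ) = (1 : ℕ) := by simp
  have hw : ((w⁻¹⁻¹ : (ZMod ℓ)ˣ) : ZMod ℓ) = (2 : ℕ) := by simp [w]
  have hdet : IsUnit (minusProj (elemU ℓ r) 1 * minusProj (elemV ℓ r) w⁻¹
      - minusProj (elemU ℓ r) w⁻¹ * minusProj (elemV ℓ r) 1) := by
    rw [minusProj_elemU one_pos (by omega) h1, minusProj_elemU two_pos (by omega) hw,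
      minusProj_elemV one_pos (by omega) h1, minusProj_elemV two_pos (by omega) hw]
    convert (ZMod.isUnit_iff_coprime 2 r).mpr (Nat.coprime_two_left.mpr hrodd) using 1
    push_cast
    ring
  exact (LinearIndependent.pair_of_isUnit_det 1 w⁻¹ hdet).nonempty_addEquiv_closure_pair

/-- Let ℓ > 3 be an odd prime and r an odd prime; in the group ring
(ℤ/rℤ)[Δ] with Δ = (ℤ/ℓℤ)ˣ, let u = Σ_{i=1}^{ℓ-1} i·δ_i⁻¹ and
v = Σ_{i=(ℓ+1)/2}^{ℓ-1} δ_i⁻¹.  Projecting to the minus part via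
δ_{ℓ-i}⁻¹ ↦ -δ_i⁻¹ (coefficientwise: π(x)(d) = x(d) - x(-d)), the images of u and v
generate a subgroup isomorphic to (ℤ/rℤ)². -/
theorem stmt_8 (ℓ r : ℕ) [Fact ℓ.Prime] [Fact r.Prime]
    (hlodd : Odd ℓ) (hl3 : 3 < ℓ) (hrodd : Odd r) :
    ∀ u v : MonoidAlgebra (ZMod r) (ZMod ℓ)ˣ,
      u = MonoidAlgebra.ofCoeff (∑ d : (ZMod ℓ)ˣ, Finsupp.single d⁻¹ (((d : ZMod ℓ).val : ZMod r))) →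
      v = MonoidAlgebra.ofCoeff (∑ d ∈ Finset.univ.filter (fun d : (ZMod ℓ)ˣ => (ℓ + 1) / 2 ≤ (d : ZMod ℓ).val),
            Finsupp.single d⁻¹ (1 : ZMod r)) →
      ∀ π : MonoidAlgebra (ZMod r) (ZMod ℓ)ˣ → ((ZMod ℓ)ˣ → ZMod r),
        (∀ x d, π x d = x.coeff d - x.coeff (-d)) →
        Nonempty (↥(AddSubgroup.closure ({π u, π v} : Set ((ZMod ℓ)ˣ → ZMod r)))
          ≃+ (ZMod r × ZMod r)) :=
  stmt_8_general ℓ r hlodd hl3 hrodd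
end

section
/- Let G be a finite abelian group, K a number field, and M, M' two tame G-Galois algebra extensions of K that are arithmetically disjoint over K. Then the class invariant map satisfies pic(M * M') = pic(M)·pic(M') in Pic(O_K[G]), where * denotes the product in the group H(K,G) of G-extensions. -/
open NumberField TensorProduct

set_option synthInstance.maxHeartbeats 800000
set_option maxHeartbeats 1600000

section GaloisAlgebras

variable (K : Type*) [Field K] [NumberField K]
variable (G : Type*) [CommGroup G] [Fintype G]

variable (M : Type*) [CommRing M] [Algebra K M]
  [MulSemiringAction G M] [SMulCommClass G K M]

/-- The canonical map M ⊗_K M → Π_G M, x ⊗ y ↦ (x · g(y))_g . -/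
noncomputable def galoisMap : TensorProduct K M M →ₗ[K] (G → M) :=
  TensorProduct.lift
    (LinearMap.mk₂ K (fun x y => fun g => x * g • y)
      (fun x x' y => by funext g; simp [add_mul])
      (fun c x y => by funext g; simp [smul_mul_assoc])
      (fun x y y' => by funext g; simp [smul_add, mul_add])
      (fun c x y => by funext g; show x * g • c • y = c • (x * g • y); rw [smul_comm g c y, mul_smul_comm]))

/-- `M` is a `G`-Galois algebra over `K`: the `G`-fixed elements are exactly `K` and
the canonical map `M ⊗_K M → Π_G M` is bijective. -/
noncomputable def IsGaloisAlgebra : Prop :=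
  (∀ x : M, (∀ g : G, g • x = x) → ∃ a : K, x = algebraMap K M a) ∧
  Function.Bijective (galoisMap K G M)

/-- `M` is tame over `K`: the trace maps the integral elements onto `O_K`. -/
noncomputable def IsTameGalgebra : Prop :=
  ∀ a : 𝓞 K, ∃ x : M, IsIntegral (𝓞 K) x ∧
    Algebra.trace K M x = algebraMap (𝓞 K) K a

/-- `g • ·` preserves integrality, giving an action on the integral closure. -/
noncomputable def gInt (g : G) (x : ↥(integralClosure (𝓞 K) M)) :
    ↥(integralClosure (𝓞 K) M) :=
  ⟨g • (x : M), by
    have hx : IsIntegral (𝓞 K) (x : M) := x.2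
    have : g • (x : M) =
        (MulSemiringAction.toAlgHom K M g) (x : M) := rfl
    rw [this]
    exact IsIntegral.map (MulSemiringAction.toAlgHom K M g) hx⟩

end GaloisAlgebras

/-!
Let `G` act on `O_M ⊗[O_K] O_M'` anti-diagonally, by `σ g = g ⊗ g⁻¹`. The quotient by `J` is
the module of coinvariants of this representation, and by flatness of `O_M` over the Dedekind
domain `O_K` and arithmetic disjointness, `O_{M*M'}` is its module of invariants. Tameness gives
`x₀ ∈ O_M` of trace one, i.e. `∑ g, g • x₀ = 1`, so multiplication `s` by `x₀` on the first
factor satisfies `∑ g, σ g * s * σ g⁻¹ = 1`: the representation is cohomologically trivial, and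
the norm `∑ g, σ g` induces an isomorphism from coinvariants onto invariants. As `G` is abelian,
this isomorphism commutes with the action of `G` through the first factor.
-/

namespace Representation

variable {k G V : Type*} [CommRing k] [Group G] [Fintype G] [AddCommGroup V] [Module k V]
  (ρ : Representation k G V)

noncomputable def normCoinvariants : ρ.Coinvariants →ₗ[k] ρ.invariants :=
  Coinvariants.lift ρ (ρ.norm.codRestrict ρ.invariants fun v g => ρ.self_norm_apply g v)
    fun g => LinearMap.ext fun v => Subtype.ext (ρ.norm_self_apply g v)

theorem commute_norm_of_forall_commute {f : Module.End k V} (hf : ∀ g, Commute f (ρ g)) :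
    Commute f ρ.norm :=
  Commute.sum_right _ _ _ fun g _ => hf g

variable {ρ} {s : Module.End k V}

theorem Coinvariants.mk_eq_mk_norm (hs : ∑ g : G, ρ g * s * ρ g⁻¹ = 1) (v : V) :
    Coinvariants.mk ρ v = Coinvariants.mk ρ (s (ρ.norm v)) := by
  have hv : v = ∑ g : G, ρ g (s (ρ g⁻¹ v)) := by
    simpa using (LinearMap.congr_fun hs v).symm
  have hnorm : ρ.norm v = ∑ g : G, ρ g⁻¹ v := by
    rw [norm, LinearMap.sum_apply]
    exact (Fintype.sum_equiv (Equiv.inv G) _ _ fun g => rfl).symm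
  conv_lhs => rw [hv]
  simp [hnorm, map_sum]

theorem norm_apply_eq_self_of_mem_invariants (hs : ∑ g : G, ρ g * s * ρ g⁻¹ = 1) {v : V}
    (hv : v ∈ ρ.invariants) : ρ.norm (s v) = v := by
  have hv' : ∀ g : G, ρ g⁻¹ v = v := fun g => hv g⁻¹
  simpa [norm, hv'] using LinearMap.congr_fun hs v

theorem bijective_normCoinvariants (hs : ∑ g : G, ρ g * s * ρ g⁻¹ = 1) :
    Function.Bijective ρ.normCoinvariants := by
  refine ⟨(injective_iff_map_eq_zero _).2 fun c hc => ?_, fun w => ?_⟩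
  · induction c using Coinvariants.induction_on with
    | h v =>
      have : ρ.norm v = 0 := congrArg Subtype.val hc
      rw [Coinvariants.mk_eq_mk_norm hs, this, map_zero, map_zero]
  · exact ⟨Coinvariants.mk ρ (s w), Subtype.ext (norm_apply_eq_self_of_mem_invariants hs w.2)⟩

noncomputable def normCoinvariantsEquiv (hs : ∑ g : G, ρ g * s * ρ g⁻¹ = 1) :
    ρ.Coinvariants ≃ₗ[k] ρ.invariants :=
  LinearEquiv.ofBijective ρ.normCoinvariants (bijective_normCoinvariants hs)

theorem sum_tprod_mul_rTensor_mul_eq_one {W : Type*} [AddCommGroup W] [Module k W]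
    (hs : ∑ g : G, ρ g * s * ρ g⁻¹ = 1) (τ : Representation k G W) :
    ∑ g : G, ρ.tprod τ g * s.rTensor W * ρ.tprod τ g⁻¹ = 1 := by
  have hconj (g : G) :
      ρ.tprod τ g * s.rTensor W * ρ.tprod τ g⁻¹ = (ρ g * s * ρ g⁻¹).rTensor W := by
    ext x y
    simp [self_inv_apply]
  rw [Finset.sum_congr rfl fun g _ => hconj g, ← map_one (Module.End.rTensorAlgHom k V W), ← hs,
    map_sum]
  rfl

end Representation

section GaloisAlgebra

variable (K : Type*) [Field K] (G : Type*) [CommGroup G]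
  (M : Type*) [CommRing M] [Algebra K M] [MulSemiringAction G M] [SMulCommClass G K M]

theorem galoisMap_tmul (x y : M) : galoisMap K G M (x ⊗ₜ[K] y) = fun g => x * g • y := rfl

theorem galoisMap_smul (m : M) (t : M ⊗[K] M) :
    galoisMap K G M (m • t) = m • galoisMap K G M t := by
  induction t using TensorProduct.induction_on with
  | zero => simp
  | tmul x y =>
    ext g
    simp [TensorProduct.smul_tmul', galoisMap_tmul, mul_assoc]
  | add s t hs ht => rw [smul_add, map_add, hs, ht, map_add, smul_add]

theorem galoisMap_baseChange_lmul (x : M) (t : M ⊗[K] M) :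
    galoisMap K G M ((Algebra.lmul K M x).baseChange M t) =
      (fun g => g • x) * galoisMap K G M t := by
  induction t using TensorProduct.induction_on with
  | zero => simp
  | tmul a b =>
    ext g
    simp [galoisMap_tmul, smul_mul']
    ring
  | add s t hs ht => rw [map_add, map_add, hs, ht, map_add, mul_add]

variable {K G M}

noncomputable def galoisEquiv (hbij : Function.Bijective (galoisMap K G M)) :
    M ⊗[K] M ≃ₗ[M] (G → M) :=
  LinearEquiv.ofBijective
    { toFun := galoisMap K G M, map_add' := map_add _, map_smul' := galoisMap_smul K G M } hbij

theorem galoisEquiv_apply (hbij : Function.Bijective (galoisMap K G M)) (t : M ⊗[K] M) :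
    galoisEquiv hbij t = galoisMap K G M t := rfl

/- After base change to `M`, the Galois isomorphism `M ⊗[K] M ≃ G → M` diagonalises
multiplication by `x`, with eigenvalues the conjugates `g • x`. -/
theorem algebraMap_trace_eq_sum_smul [Fintype G] [Module.Finite K M]
    (hbij : Function.Bijective (galoisMap K G M)) (x : M) :
    algebraMap K M (Algebra.trace K M x) = ∑ g : G, g • x := by
  classical
  have hconj : (galoisEquiv hbij).conj ((Algebra.lmul K M x).baseChange M) =
      Matrix.toLin' (Matrix.diagonal fun g => g • x) := by
    refine LinearMap.ext fun v => ?_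
    obtain ⟨t, rfl⟩ := (galoisEquiv hbij).surjective v
    ext g
    rw [LinearEquiv.conj_apply_apply, LinearEquiv.symm_apply_apply, galoisEquiv_apply,
      galoisEquiv_apply, galoisMap_baseChange_lmul, Matrix.toLin'_apply, Matrix.mulVec_diagonal,
      Pi.mul_apply]
  rw [Algebra.trace_apply, ← LinearMap.trace_baseChange,
    ← LinearMap.trace_conj' _ (galoisEquiv hbij), hconj, Matrix.trace_toLin'_eq,
    Matrix.trace_diagonal]

end GaloisAlgebra

section IntegralRepresentation

variable (K : Type*) [Field K] (G : Type*) [CommGroup G]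
  (M : Type*) [CommRing M] [Algebra K M] [MulSemiringAction G M] [SMulCommClass G K M]

noncomputable def integralRep : Representation (𝓞 K) G (integralClosure (𝓞 K) M) where
  toFun g :=
    { toFun := gInt K G M g
      map_add' x y := Subtype.ext (smul_add g (x : M) y)
      map_smul' c x := Subtype.ext <| by
        change g • (c • (x : M)) = c • g • (x : M)
        rw [← algebraMap_smul K c (x : M), ← algebraMap_smul K c (g • (x : M)), smul_comm] }
  map_one' := LinearMap.ext fun x => Subtype.ext (one_smul G (x : M))
  map_mul' g h := LinearMap.ext fun x => Subtype.ext (mul_smul g h (x : M))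

theorem integralRep_apply (g : G) (x : integralClosure (𝓞 K) M) :
    integralRep K G M g x = gInt K G M g x := rfl

variable {K G M}

theorem exists_sum_integralRep_eq_one [Fintype G] [Module.Finite K M]
    (hbij : Function.Bijective (galoisMap K G M)) (htame : IsTameGalgebra K M) :
    ∃ x₀ : integralClosure (𝓞 K) M, ∑ g : G, integralRep K G M g x₀ = 1 := by
  obtain ⟨x, hx, htr⟩ := htame 1
  refine ⟨⟨x, hx⟩, Subtype.ext ?_⟩
  rw [AddSubmonoidClass.coe_finsetSum]
  change ∑ g : G, g • x = 1
  rw [← algebraMap_trace_eq_sum_smul hbij, htr, map_one, map_one]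

theorem sum_integralRep_mul_mulLeft_mul_eq_one [Fintype G] {x₀ : integralClosure (𝓞 K) M}
    (hx₀ : ∑ g : G, integralRep K G M g x₀ = 1) :
    ∑ g : G, integralRep K G M g * LinearMap.mulLeft (𝓞 K) x₀ * integralRep K G M g⁻¹ = 1 := by
  ext x
  have hconj (g : G) : (integralRep K G M g * LinearMap.mulLeft (𝓞 K) x₀ *
      integralRep K G M g⁻¹) x = integralRep K G M g x₀ * x :=
    Subtype.ext <| by
      change g • ((x₀ : M) * g⁻¹ • (x : M)) = g • (x₀ : M) * x
      rw [smul_mul', smul_inv_smul]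
  simp [LinearMap.sum_apply, hconj, ← Finset.sum_mul, hx₀]

end IntegralRepresentation

section IntegralTensor

variable (K : Type*) [Field K] (M M' : Type*) [CommRing M] [CommRing M'] [Algebra K M]
  [Algebra K M']

-- Over the Dedekind domain `𝓞 K` this gives flatness of `M` and of `integralClosure (𝓞 K) M`.
instance isTorsionFree_ringOfIntegers : Module.IsTorsionFree (𝓞 K) M := .trans K

noncomputable def integralTensorMap :
    integralClosure (𝓞 K) M ⊗[𝓞 K] integralClosure (𝓞 K) M' →ₗ[𝓞 K] M ⊗[K] M' :=
  TensorProduct.mapOfCompatibleSMul K (𝓞 K) (𝓞 K) M M' ∘ₗ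
    TensorProduct.map (integralClosure (𝓞 K) M).val.toLinearMap
      (integralClosure (𝓞 K) M').val.toLinearMap

theorem integralTensorMap_tmul (x : integralClosure (𝓞 K) M) (y : integralClosure (𝓞 K) M') :
    integralTensorMap K M M' (x ⊗ₜ y) = (x : M) ⊗ₜ[K] (y : M') := rfl

theorem integralTensorMap_injective [NumberField K] :
    Function.Injective (integralTensorMap K M M') := by
  have := IsLocalization.tensorProduct_compatibleSMul (nonZeroDivisors (𝓞 K)) K M M'
  have hval : Function.Injective (TensorProduct.map (integralClosure (𝓞 K) M).val.toLinearMap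
      (integralClosure (𝓞 K) M').val.toLinearMap) :=
    TensorProduct.map_injective_of_flat_flat _ _ Subtype.val_injective Subtype.val_injective
  exact (TensorProduct.equivOfCompatibleSMul K (𝓞 K) (𝓞 K) M M').injective.comp hval

theorem isIntegral_integralTensorMap
    (t : integralClosure (𝓞 K) M ⊗[𝓞 K] integralClosure (𝓞 K) M') :
    IsIntegral (𝓞 K) (integralTensorMap K M M' t) := by
  induction t using TensorProduct.induction_on with
  | zero => simpa using isIntegral_zero
  | tmul x y =>
    rw [integralTensorMap_tmul, ← mul_one (x : M), ← one_mul (y : M'),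
      ← Algebra.TensorProduct.tmul_mul_tmul]
    exact (x.2.map (Algebra.TensorProduct.includeLeft : M →ₐ[K] M ⊗[K] M')).mul
      (y.2.map (Algebra.TensorProduct.includeRight : M' →ₐ[K] M ⊗[K] M'))
  | add s t hs ht => simpa using hs.add ht

theorem span_tmul_isIntegral_le_range :
    Submodule.span (𝓞 K) {t : M ⊗[K] M' | ∃ (x : M) (y : M'),
        IsIntegral (𝓞 K) x ∧ IsIntegral (𝓞 K) y ∧ t = x ⊗ₜ[K] y} ≤
      LinearMap.range (integralTensorMap K M M') := by
  rw [Submodule.span_le]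
  rintro _ ⟨x, y, hx, hy, rfl⟩
  exact ⟨(⟨x, hx⟩ : integralClosure (𝓞 K) M) ⊗ₜ (⟨y, hy⟩ : integralClosure (𝓞 K) M'), rfl⟩

variable (G : Type*) [CommGroup G] [MulSemiringAction G M] [SMulCommClass G K M]

theorem integralTensorMap_rTensor_integralRep (g : G)
    (t : integralClosure (𝓞 K) M ⊗[𝓞 K] integralClosure (𝓞 K) M') :
    integralTensorMap K M M' ((integralRep K G M g).rTensor _ t) =
      Algebra.TensorProduct.map (MulSemiringAction.toAlgHom K M g) (AlgHom.id K M')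
        (integralTensorMap K M M' t) := by
  induction t using TensorProduct.induction_on with
  | zero => simp
  | tmul x y => rfl
  | add s t hs ht => simp only [map_add, hs, ht]

variable [MulSemiringAction G M'] [SMulCommClass G K M']

noncomputable def antidiagRep :
    Representation (𝓞 K) G (integralClosure (𝓞 K) M ⊗[𝓞 K] integralClosure (𝓞 K) M') :=
  (integralRep K G M).tprod ((integralRep K G M').comp invMonoidHom)

theorem antidiagRep_apply (g : G) :
    antidiagRep K M M' G g = TensorProduct.map (integralRep K G M g) (integralRep K G M' g⁻¹) :=
  rfl

theorem integralTensorMap_antidiagRep (g : G)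
    (t : integralClosure (𝓞 K) M ⊗[𝓞 K] integralClosure (𝓞 K) M') :
    integralTensorMap K M M' (antidiagRep K M M' G g t) =
      Algebra.TensorProduct.map (MulSemiringAction.toAlgHom K M g)
        (MulSemiringAction.toAlgHom K M' g⁻¹) (integralTensorMap K M M' t) := by
  induction t using TensorProduct.induction_on with
  | zero => simp
  | tmul x y => rfl
  | add s t hs ht => simp only [map_add, hs, ht]

theorem commute_rTensor_integralRep_antidiagRep (g h : G) :
    Commute ((integralRep K G M g).rTensor (integralClosure (𝓞 K) M'))
      (antidiagRep K M M' G h) := by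
  refine TensorProduct.ext' fun x y => ?_
  rw [Module.End.mul_apply, Module.End.mul_apply, antidiagRep_apply, TensorProduct.map_tmul,
    LinearMap.rTensor_tmul, LinearMap.rTensor_tmul, TensorProduct.map_tmul, ← Module.End.mul_apply,
    ← Module.End.mul_apply, ← map_mul, ← map_mul, mul_comm]

theorem sum_antidiagRep_mul_rTensor_mul_eq_one [Fintype G] {x₀ : integralClosure (𝓞 K) M}
    (hx₀ : ∑ g : G, integralRep K G M g x₀ = 1) :
    ∑ g : G, antidiagRep K M M' G g * (LinearMap.mulLeft (𝓞 K) x₀).rTensor _ *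
      antidiagRep K M M' G g⁻¹ = 1 :=
  Representation.sum_tprod_mul_rTensor_mul_eq_one (sum_integralRep_mul_mulLeft_mul_eq_one hx₀) _

theorem coinvariantsKer_antidiagRep :
    Representation.Coinvariants.ker (antidiagRep K M M' G) = Submodule.span (𝓞 K)
      {t | ∃ (g : G) (x : integralClosure (𝓞 K) M) (y : integralClosure (𝓞 K) M'),
        t = gInt K G M g x ⊗ₜ y - x ⊗ₜ gInt K G M' g y} := by
  refine le_antisymm (Submodule.span_le.2 ?_) (Submodule.span_le.2 ?_)
  · rintro _ ⟨⟨g, t⟩, rfl⟩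
    dsimp only
    induction t using TensorProduct.induction_on with
    | zero => simp
    | tmul x y =>
      refine Submodule.subset_span ⟨g, x, integralRep K G M' g⁻¹ y, ?_⟩
      rw [← integralRep_apply, ← integralRep_apply, Representation.self_inv_apply]
      rfl
    | add s t hs ht =>
      rw [map_add, add_sub_add_comm]
      exact add_mem hs ht
  · rintro _ ⟨g, x, y, rfl⟩
    refine Representation.Coinvariants.mem_ker_of_eq g (x ⊗ₜ integralRep K G M' g y) _ ?_
    rw [antidiagRep_apply, TensorProduct.map_tmul, Representation.inv_self_apply]
    rfl

variable {K M M' G} in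
noncomputable def antidiagInvariantsEquiv [NumberField K] (N : Submodule (𝓞 K) (M ⊗[K] M'))
    (hN : ∀ z : M ⊗[K] M', z ∈ N ↔
      ((∀ g : G, Algebra.TensorProduct.map (MulSemiringAction.toAlgHom K M g)
          (MulSemiringAction.toAlgHom K M' g⁻¹) z = z) ∧ IsIntegral (𝓞 K) z))
    (harith : ∀ z : M ⊗[K] M', IsIntegral (𝓞 K) z →
      z ∈ Submodule.span (𝓞 K) {t : M ⊗[K] M' | ∃ (x : M) (y : M'),
        IsIntegral (𝓞 K) x ∧ IsIntegral (𝓞 K) y ∧ t = x ⊗ₜ[K] y}) :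
    (antidiagRep K M M' G).invariants ≃ₗ[𝓞 K] N :=
  LinearEquiv.ofBijective
    ((integralTensorMap K M M').restrict fun t ht => (hN _).2
      ⟨fun g => by rw [← integralTensorMap_antidiagRep, ht g],
        isIntegral_integralTensorMap K M M' t⟩)
    ⟨fun _ _ h => Subtype.ext (integralTensorMap_injective K M M' (congrArg Subtype.val h)),
      fun ⟨z, hz⟩ => by
        obtain ⟨hfix, hint⟩ := (hN z).1 hz
        obtain ⟨t, rfl⟩ := span_tmul_isIntegral_le_range K M M' (harith z hint)
        refine ⟨⟨t, fun g => integralTensorMap_injective K M M' ?_⟩, rfl⟩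
        rw [integralTensorMap_antidiagRep, hfix g]⟩

end IntegralTensor

theorem stmt_12_general (K : Type*) [Field K] [NumberField K]
    (G : Type*) [CommGroup G] [Fintype G]
    (M M' : Type*) [CommRing M] [CommRing M'] [Algebra K M] [Algebra K M']
    [MulSemiringAction G M] [SMulCommClass G K M] [Module.Finite K M]
    [MulSemiringAction G M'] [SMulCommClass G K M']
    (hgal : IsGaloisAlgebra K G M)
    (htame : IsTameGalgebra K M)
    -- the O_K-module O_M ⊗_{O_K} O_M', and the submodule J of relations
    -- g•x ⊗ y − x ⊗ g•y :
    (J : Submodule (𝓞 K)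
      (TensorProduct (𝓞 K) ↥(integralClosure (𝓞 K) M) ↥(integralClosure (𝓞 K) M')))
    (hJ : J = Submodule.span (𝓞 K)
      {t | ∃ (g : G) (x : ↥(integralClosure (𝓞 K) M)) (y : ↥(integralClosure (𝓞 K) M')),
        t = (gInt K G M g x) ⊗ₜ[𝓞 K] y - x ⊗ₜ[𝓞 K] (gInt K G M' g y)})
    -- O_{M*M'} : the integral elements of (M ⊗_K M') fixed by the anti-diagonal D
    (oStar : Submodule (𝓞 K) (TensorProduct K M M'))
    (hoStar : ∀ z : TensorProduct K M M', z ∈ oStar ↔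
      ((∀ g : G, (Algebra.TensorProduct.map (MulSemiringAction.toAlgHom K M g)
          (MulSemiringAction.toAlgHom K M' g⁻¹)) z = z) ∧ IsIntegral (𝓞 K) z))
    -- arithmetic disjointness: O_{M ⊗ M'} = O_M ⊗_{O_K} O_M'
    (harith : ∀ z : TensorProduct K M M', IsIntegral (𝓞 K) z →
      z ∈ Submodule.span (𝓞 K)
        {t : TensorProduct K M M' | ∃ (x : M) (y : M'),
          IsIntegral (𝓞 K) x ∧ IsIntegral (𝓞 K) y ∧ t = x ⊗ₜ[K] y})
    -- the G-action on (O_M ⊗_{O_K} O_M')/J, through the first factor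
    (ρbar : G → ((TensorProduct (𝓞 K) ↥(integralClosure (𝓞 K) M)
        ↥(integralClosure (𝓞 K) M')) ⧸ J) →ₗ[𝓞 K]
      ((TensorProduct (𝓞 K) ↥(integralClosure (𝓞 K) M)
        ↥(integralClosure (𝓞 K) M')) ⧸ J))
    (hρbar : ∀ (g : G) x y, ρbar g (Submodule.Quotient.mk (x ⊗ₜ[𝓞 K] y)) =
      Submodule.Quotient.mk ((gInt K G M g x) ⊗ₜ[𝓞 K] y)) :
    -- conclusion: pic(M*M') = pic(M)·pic(M')
    ∃ e : ↥oStar ≃ₗ[𝓞 K]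
        ((TensorProduct (𝓞 K) ↥(integralClosure (𝓞 K) M)
          ↥(integralClosure (𝓞 K) M')) ⧸ J),
      ∀ (g : G) (z w : ↥oStar),
        (w : TensorProduct K M M') =
          (Algebra.TensorProduct.map (MulSemiringAction.toAlgHom K M g)
            (AlgHom.id K M')) (z : TensorProduct K M M') →
        e w = ρbar g (e z) := by
  obtain ⟨x₀, hx₀⟩ := exists_sum_integralRep_eq_one hgal.2 htame
  let e := (Submodule.quotEquivOfEq J _ (hJ.trans (coinvariantsKer_antidiagRep K M M' G).symm)
    |>.trans (Representation.normCoinvariantsEquiv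
      (sum_antidiagRep_mul_rTensor_mul_eq_one K M M' G hx₀))
    |>.trans (antidiagInvariantsEquiv oStar hoStar harith))
  have he t : (e (Submodule.Quotient.mk t) : M ⊗[K] M') =
      integralTensorMap K M M' ((antidiagRep K M M' G).norm t) := rfl
  have hρbar' (g : G) : ρbar g ∘ₗ J.mkQ = J.mkQ ∘ₗ (integralRep K G M g).rTensor _ :=
    TensorProduct.ext' (hρbar g)
  refine ⟨e.symm, fun g z w hw => e.symm_apply_eq.2 (Subtype.ext ?_)⟩
  obtain ⟨t, ht⟩ := Submodule.Quotient.mk_surjective J (e.symm z)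
  calc (w : M ⊗[K] M')
      = Algebra.TensorProduct.map (MulSemiringAction.toAlgHom K M g) (AlgHom.id K M')
          (integralTensorMap K M M' ((antidiagRep K M M' G).norm t)) := by
        rw [hw, ← he, ht, e.apply_symm_apply]
    _ = integralTensorMap K M M'
          ((antidiagRep K M M' G).norm ((integralRep K G M g).rTensor _ t)) := by
        rw [← integralTensorMap_rTensor_integralRep]
        exact congrArg (integralTensorMap K M M') (LinearMap.congr_fun
          (Representation.commute_norm_of_forall_commute _
            (commute_rTensor_integralRep_antidiagRep K M M' G g)).eq t)
    _ = e (ρbar g (e.symm z)) := by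
        rw [← ht, ← he]
        exact congrArg (fun u => (e u : M ⊗[K] M')) (LinearMap.congr_fun (hρbar' g) t).symm

/-- let M, M' be tame G-Galois algebra extensions of a number field K
(G finite abelian), arithmetically disjoint over K.  Then
pic(M * M') = pic(M) · pic(M') in Pic(O_K[G]); concretely, with
M * M' = (M ⊗_K M')^D (D the anti-diagonal), there is an isomorphism
O_{M*M'} ≅ O_M ⊗_{O_K[G]} O_M' = (O_M ⊗_{O_K} O_M')/J (J generated by the elements
g·x ⊗ y − x ⊗ g·y) which is O_K-linear and G-equivariant. -/
theorem stmt_12 (K : Type*) [Field K] [NumberField K]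
    (G : Type*) [CommGroup G] [Fintype G]
    (M M' : Type*) [CommRing M] [CommRing M'] [Algebra K M] [Algebra K M']
    [MulSemiringAction G M] [SMulCommClass G K M] [Module.Finite K M]
    [MulSemiringAction G M'] [SMulCommClass G K M'] [Module.Finite K M']
    (hgal : IsGaloisAlgebra K G M) (hgal' : IsGaloisAlgebra K G M')
    (htame : IsTameGalgebra K M) (htame' : IsTameGalgebra K M')
    -- the O_K-module O_M ⊗_{O_K} O_M', and the submodule J of relations
    -- g•x ⊗ y − x ⊗ g•y :
    (J : Submodule (𝓞 K)
      (TensorProduct (𝓞 K) ↥(integralClosure (𝓞 K) M) ↥(integralClosure (𝓞 K) M')))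
    (hJ : J = Submodule.span (𝓞 K)
      {t | ∃ (g : G) (x : ↥(integralClosure (𝓞 K) M)) (y : ↥(integralClosure (𝓞 K) M')),
        t = (gInt K G M g x) ⊗ₜ[𝓞 K] y - x ⊗ₜ[𝓞 K] (gInt K G M' g y)})
    -- O_{M*M'} : the integral elements of (M ⊗_K M') fixed by the anti-diagonal D
    (oStar : Submodule (𝓞 K) (TensorProduct K M M'))
    (hoStar : ∀ z : TensorProduct K M M', z ∈ oStar ↔
      ((∀ g : G, (Algebra.TensorProduct.map (MulSemiringAction.toAlgHom K M g)
          (MulSemiringAction.toAlgHom K M' g⁻¹)) z = z) ∧ IsIntegral (𝓞 K) z))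
    -- arithmetic disjointness: O_{M ⊗ M'} = O_M ⊗_{O_K} O_M'
    (harith : ∀ z : TensorProduct K M M', IsIntegral (𝓞 K) z →
      z ∈ Submodule.span (𝓞 K)
        {t : TensorProduct K M M' | ∃ (x : M) (y : M'),
          IsIntegral (𝓞 K) x ∧ IsIntegral (𝓞 K) y ∧ t = x ⊗ₜ[K] y})
    -- the G-action on (O_M ⊗_{O_K} O_M')/J, through the first factor
    (ρbar : G → ((TensorProduct (𝓞 K) ↥(integralClosure (𝓞 K) M)
        ↥(integralClosure (𝓞 K) M')) ⧸ J) →ₗ[𝓞 K]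
      ((TensorProduct (𝓞 K) ↥(integralClosure (𝓞 K) M)
        ↥(integralClosure (𝓞 K) M')) ⧸ J))
    (hρbar : ∀ (g : G) x y, ρbar g (Submodule.Quotient.mk (x ⊗ₜ[𝓞 K] y)) =
      Submodule.Quotient.mk ((gInt K G M g x) ⊗ₜ[𝓞 K] y)) :
    -- conclusion: pic(M*M') = pic(M)·pic(M')
    ∃ e : ↥oStar ≃ₗ[𝓞 K]
        ((TensorProduct (𝓞 K) ↥(integralClosure (𝓞 K) M)
          ↥(integralClosure (𝓞 K) M')) ⧸ J),
      ∀ (g : G) (z w : ↥oStar),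
        (w : TensorProduct K M M') =
          (Algebra.TensorProduct.map (MulSemiringAction.toAlgHom K M g)
            (AlgHom.id K M')) (z : TensorProduct K M M') →
        e w = ρbar g (e z) :=
  stmt_12_general K G M M' hgal htame J hJ oStar hoStar harith ρbar hρbar
end

section
/- Let G be a finite abelian group of odd order, U ≤ G a subgroup, and consider the complex of abelian groups G → G^{(2)} → G^{(3)}, where G^{(2)} = (G × G)/{(z, z⁻¹) : z ∈ U}, G^{(3)} = (G × G × G)/(analogous relations over U), the first map sends x to the class of (x, x⁻¹), and the second map sends the class of (x, y) to the class of (x, y, 1)·(x⁻¹, 1, y⁻¹)·(1, x, y). Then this complex is exact at the middle term. -/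
open Subgroup

/-! The second differential sends the class of `(x, y)` to the class of `(1, y x, 1)`, and the
product map `(a, b, c) ↦ a b c` kills every relation `(z, z⁻¹, 1)`, `(1, z, z⁻¹)` of `G⁽³⁾`.
So `(1, c, 1)` is trivial in `G⁽³⁾` only when `c = 1`: the class of `(x, y)` is a cycle
exactly when `y = x⁻¹`, i.e. when it is a boundary. -/

section AmitsurComplex

variable {G : Type*} [CommGroup G]

theorem amitsur_d2_eq (x y : G) :
    ((x, y, 1) * (x⁻¹, 1, y⁻¹) * (1, x, y) : G × G × G) = (1, y * x, 1) := by
  ext <;> simp [mul_comm]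

def tripleMul : G × G × G →* G :=
  MonoidHom.mk' (fun p => p.1 * p.2.1 * p.2.2) fun a b => by
    simp only [Prod.fst_mul, Prod.snd_mul]
    ac_rfl

@[simp]
theorem tripleMul_apply (a b c : G) : tripleMul (a, b, c) = a * b * c := rfl

theorem closure_antidiagonal_le_ker_tripleMul (U : Subgroup G) :
    closure ({p | ∃ z ∈ U, p = (z, z⁻¹, 1)} ∪ {p | ∃ z ∈ U, p = (1, z, z⁻¹)})
      ≤ (tripleMul : G × G × G →* G).ker := by
  rw [closure_le]
  rintro p (⟨z, -, rfl⟩ | ⟨z, -, rfl⟩) <;> simp [MonoidHom.mem_ker]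

theorem eq_one_of_middle_mem_closure_antidiagonal {U : Subgroup G} {c : G}
    (hc : ((1, c, 1) : G × G × G) ∈
      closure ({p | ∃ z ∈ U, p = (z, z⁻¹, 1)} ∪ {p | ∃ z ∈ U, p = (1, z, z⁻¹)})) :
    c = 1 := by
  simpa [MonoidHom.mem_ker] using closure_antidiagonal_le_ker_tripleMul U hc

end AmitsurComplex

theorem stmt_14_general (G : Type*) [CommGroup G]
    (U : Subgroup G)
    (D2 : Subgroup (G × G))
    (D3 : Subgroup (G × G × G))
    (hD3 : D3 = Subgroup.closure
        ({p | ∃ z ∈ U, p = (z, z⁻¹, 1)} ∪ {p | ∃ z ∈ U, p = (1, z, z⁻¹)}))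
    (d2 : (G × G) ⧸ D2 →* (G × G × G) ⧸ D3)
    (hd2 : ∀ x y : G, d2 (QuotientGroup.mk (x, y)) =
        QuotientGroup.mk ((x, y, 1) * (x⁻¹, 1, y⁻¹) * (1, x, y))) :
    (∀ x : G, d2 (QuotientGroup.mk (x, x⁻¹)) = 1) ∧
    (∀ a : (G × G) ⧸ D2, d2 a = 1 → ∃ x : G, a = QuotientGroup.mk (x, x⁻¹)) := by
  refine ⟨fun x => ?_, fun a ha => ?_⟩
  · rw [hd2, amitsur_d2_eq, inv_mul_cancel, QuotientGroup.eq_one_iff]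
    exact one_mem D3
  · obtain ⟨⟨x, y⟩, rfl⟩ := QuotientGroup.mk_surjective a
    rw [hd2, amitsur_d2_eq, QuotientGroup.eq_one_iff, hD3] at ha
    have hyx : y * x = 1 := eq_one_of_middle_mem_closure_antidiagonal ha
    exact ⟨x, by rw [eq_inv_of_mul_eq_one_left hyx]⟩

/-- for a finite abelian group G of odd order and a subgroup U,
the complex G → G⁽²⁾ → G⁽³⁾ (with G⁽²⁾ = (G×G)/⟨(z,z⁻¹) : z ∈ U⟩,
G⁽³⁾ = (G×G×G)/⟨(z,z⁻¹,1),(1,z,z⁻¹) : z ∈ U⟩, first map x ↦ (x,x⁻¹),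
second map (x,y) ↦ (x,y,1)(x⁻¹,1,y⁻¹)(1,x,y)) is exact at the middle term. -/
theorem stmt_14 (G : Type*) [CommGroup G] [Fintype G] (hodd : Odd (Fintype.card G))
    (U : Subgroup G)
    (D2 : Subgroup (G × G)) (hD2 : D2 = Subgroup.closure {p | ∃ z ∈ U, p = (z, z⁻¹)})
    (D3 : Subgroup (G × G × G))
    (hD3 : D3 = Subgroup.closure
        ({p | ∃ z ∈ U, p = (z, z⁻¹, 1)} ∪ {p | ∃ z ∈ U, p = (1, z, z⁻¹)}))
    (d2 : (G × G) ⧸ D2 →* (G × G × G) ⧸ D3)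
    (hd2 : ∀ x y : G, d2 (QuotientGroup.mk (x, y)) =
        QuotientGroup.mk ((x, y, 1) * (x⁻¹, 1, y⁻¹) * (1, x, y))) :
    (∀ x : G, d2 (QuotientGroup.mk (x, x⁻¹)) = 1) ∧
    (∀ a : (G × G) ⧸ D2, d2 a = 1 → ∃ x : G, a = QuotientGroup.mk (x, x⁻¹)) :=
  stmt_14_general G U D2 D3 hD3 d2 hd2
end

section
/- Let K be a totally real number field and Γ an abelian group of odd order. Then the subgroup (O_K[Γ]^×)^{1−j} of the unit group of the group ring, where j is the involution induced by inversion on Γ, is contained in ±Γ. -/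
/-!
Put `v = u · j(u⁻¹)`. Since `j` is an involutive ring automorphism, `v · j(v) = 1`, and the
coefficient of `1` in `v · j(v)` is `∑ v_g²`. Applying any embedding `K → ℝ` shows that every
conjugate of every coefficient `v_g` lies in `[-1, 1]`, so by Kronecker's theorem each nonzero
`v_g` is a root of unity in a real field, i.e. `±1`. Then `∑ v_g² = 1` leaves exactly one
nonzero coefficient.
-/

open NumberField

def IsTotallyRealNF (K : Type*) [Field K] [NumberField K] : Prop :=
  ∀ φ : K →+* ℂ, ∀ x : K, (φ x).im = 0

namespace IsTotallyRealNF

variable {K : Type*} [Field K] [NumberField K]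

lemma isReal (hK : IsTotallyRealNF K) (φ : K →+* ℂ) : ComplexEmbedding.IsReal φ :=
  ComplexEmbedding.isReal_iff.mpr <| RingHom.ext fun x => Complex.conj_eq_iff_im.mpr (hK φ x)

lemma sq_eq_one_of_norm_le_one (hK : IsTotallyRealNF K) {x : 𝓞 K} (hx₀ : x ≠ 0)
    (hx : ∀ φ : K →+* ℂ, ‖φ x‖ ≤ 1) : x ^ 2 = 1 := by
  obtain ⟨n, hn, hxn⟩ := Embeddings.pow_eq_one_of_norm_le_one K ℂ
    (RingOfIntegers.coe_ne_zero_iff.mpr hx₀) x.isIntegral_coe hx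
  obtain ⟨φ⟩ : Nonempty (K →+* ℂ) := inferInstance
  set ψ := (hK.isReal φ).embedding
  have hψn : ψ x ^ n = 1 := by rw [← map_pow, hxn, map_one]
  have hψ : ψ (x ^ 2 : 𝓞 K) = ψ 1 := by
    rcases pow_eq_one_iff_cases.mp hψn with h | h | ⟨h, -⟩
    · omega
    all_goals push_cast; rw [map_pow, h]; norm_num
  exact RingOfIntegers.coe_injective (ψ.injective hψ)

lemma norm_le_one_of_sum_sq_eq_one (hK : IsTotallyRealNF K) {ι : Type*} {s : Finset ι}
    {f : ι → 𝓞 K} (hf : ∑ i ∈ s, f i ^ 2 = 1) {i : ι} (hi : i ∈ s) (φ : K →+* ℂ) :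
    ‖φ (f i)‖ ≤ 1 := by
  set ψ := (hK.isReal φ).embedding
  have hψ : ∑ k ∈ s, ψ (f k) ^ 2 = 1 := by
    simpa using congrArg (fun y : 𝓞 K => ψ y) hf
  have hle : ψ (f i) ^ 2 ≤ 1 :=
    hψ ▸ Finset.single_le_sum (fun k _ => sq_nonneg (ψ (f k))) hi
  rw [← (hK.isReal φ).coe_embedding_apply, Complex.norm_real, Real.norm_eq_abs]
  exact (sq_le_one_iff_abs_le_one _).mp hle

end IsTotallyRealNF

lemma Units.mul_map_inv_mul_map_eq_one {M F : Type*} [Monoid M] [FunLike F M M]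
    [MonoidHomClass F M M] (f : F) (hf : ∀ x, f (f x) = x) (u : Mˣ) :
    (u * f ↑u⁻¹) * f (u * f ↑u⁻¹) = 1 := by
  rw [map_mul, hf, mul_assoc, ← mul_assoc (f _), ← map_mul, Units.inv_mul, map_one, one_mul,
    Units.mul_inv]

namespace MonoidAlgebra

variable {R G : Type*} [CommSemiring R] [CommGroup G]

lemma domCongr_inv_domCongr_inv (x : MonoidAlgebra R G) :
    domCongr R R (MulEquiv.inv G) (domCongr R R (MulEquiv.inv G) x) = x := by
  ext g; simp [coeff_domCongr]

lemma coeff_mul_domCongr_inv_one (x : MonoidAlgebra R G) :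
    (x * domCongr R R (MulEquiv.inv G) x).coeff 1 = ∑ g ∈ x.coeff.support, x.coeff g ^ 2 := by
  simp [coeff_mul_apply_left, coeff_domCongr, Finsupp.sum, sq]

end MonoidAlgebra

lemma Finsupp.exists_eq_single_one_or_neg_one_of_sum_sq_eq_one {α R : Type*} [Ring R]
    [NoZeroDivisors R] [CharZero R] {f : α →₀ R} (hsq : ∀ a ∈ f.support, f a ^ 2 = 1)
    (hsum : ∑ a ∈ f.support, f a ^ 2 = 1) : ∃ a, f = single a 1 ∨ f = single a (-1) := by
  have hcard : f.support.card = 1 := by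
    rw [Finset.sum_congr rfl hsq, Finset.sum_const, nsmul_one] at hsum
    exact_mod_cast hsum
  obtain ⟨a, ha, hfa⟩ := card_support_eq_one.mp hcard
  rcases sq_eq_one_iff.mp (hsq a (mem_support_iff.mpr ha)) with h | h
  exacts [⟨a, .inl (hfa.trans (by rw [h]))⟩, ⟨a, .inr (hfa.trans (by rw [h]))⟩]

theorem stmt_15_general (K : Type*) [Field K] [NumberField K] (hK : IsTotallyRealNF K)
    (Γ : Type*) [CommGroup Γ]
    (j : MonoidAlgebra (𝓞 K) Γ ≃ₐ[𝓞 K] MonoidAlgebra (𝓞 K) Γ)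
    (hj : j = MonoidAlgebra.domCongr (𝓞 K) (𝓞 K) (MulEquiv.inv Γ))
    (u : (MonoidAlgebra (𝓞 K) Γ)ˣ) :
    ∃ γ : Γ, (u : MonoidAlgebra (𝓞 K) Γ) * j (((u⁻¹ : _ˣ) : MonoidAlgebra (𝓞 K) Γ))
        = MonoidAlgebra.single γ 1
      ∨ (u : MonoidAlgebra (𝓞 K) Γ) * j (((u⁻¹ : _ˣ) : MonoidAlgebra (𝓞 K) Γ))
        = - MonoidAlgebra.single γ 1 := by
  subst hj
  set v := (u : MonoidAlgebra (𝓞 K) Γ) *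
    MonoidAlgebra.domCongr (𝓞 K) (𝓞 K) (MulEquiv.inv Γ) ↑u⁻¹
  have hsum : ∑ g ∈ v.coeff.support, v.coeff g ^ 2 = 1 := by
    rw [← MonoidAlgebra.coeff_mul_domCongr_inv_one, Units.mul_map_inv_mul_map_eq_one _
      MonoidAlgebra.domCongr_inv_domCongr_inv u, MonoidAlgebra.coeff_one_one]
  have hsq : ∀ g ∈ v.coeff.support, v.coeff g ^ 2 = 1 := fun g hg =>
    hK.sq_eq_one_of_norm_le_one (Finsupp.mem_support_iff.mp hg)
      (hK.norm_le_one_of_sum_sq_eq_one hsum hg)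
  obtain ⟨γ, h | h⟩ := Finsupp.exists_eq_single_one_or_neg_one_of_sum_sq_eq_one hsq hsum
  · exact ⟨γ, .inl (MonoidAlgebra.coeff_injective (by rw [h, MonoidAlgebra.coeff_single]))⟩
  · refine ⟨γ, .inr (MonoidAlgebra.coeff_injective ?_)⟩
    rw [h, MonoidAlgebra.coeff_neg, MonoidAlgebra.coeff_single, Finsupp.single_neg]

/-- Lenstra: for K a totally real number field and Γ an abelian group of
odd order, every unit of O_K[Γ] of the form u^{1-j} = u · j(u)⁻¹, where j is the
involution induced by γ ↦ γ⁻¹, is of the form ±γ for some γ ∈ Γ. -/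
theorem stmt_15 (K : Type*) [Field K] [NumberField K] (hK : IsTotallyRealNF K)
    (Γ : Type*) [CommGroup Γ] [Fintype Γ] (hΓ : Odd (Fintype.card Γ))
    (j : MonoidAlgebra (𝓞 K) Γ ≃ₐ[𝓞 K] MonoidAlgebra (𝓞 K) Γ)
    (hj : j = MonoidAlgebra.domCongr (𝓞 K) (𝓞 K) (MulEquiv.inv Γ))
    (u : (MonoidAlgebra (𝓞 K) Γ)ˣ) :
    ∃ γ : Γ, (u : MonoidAlgebra (𝓞 K) Γ) * j (((u⁻¹ : _ˣ) : MonoidAlgebra (𝓞 K) Γ))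
        = MonoidAlgebra.single γ 1
      ∨ (u : MonoidAlgebra (𝓞 K) Γ) * j (((u⁻¹ : _ˣ) : MonoidAlgebra (𝓞 K) Γ))
        = - MonoidAlgebra.single γ 1 :=
  stmt_15_general K hK Γ j hj u
end
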